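/- For any two distinct irrational real numbers α and β, there exists a matrix g = [[a,b],[c,d]] in the theta group Θ such that the pair ((aα+b)/(cα+d), (aβ+b)/(cβ+d)) lies in 𝓘 := (1,∞) × [−√3, −√3+2) ∪ (−∞,−1) × (√3−2, √3]. -/

import Mathlib

open MeasureTheory Real Set Filter Topology

namespace SCF

/-- The involution `ι(x) = (1−x)/(1+x)`. -/
noncomputable def iota (x : ℝ) : ℝ := (1 - x) / (1 + x)

/-- Even continued-fraction step.  For `y ∈ (0,1/2]` one has
`⌊(1/y+1)/2⌋ = k` whenever `1/y ∈ (2k−1, 2k+1)`, so `Te y = |1/y − 2k|`;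
explicitly `Te y = 1/y − 2` on `[1/3,1/2]`, `Te y = 1/y − 2k` on
`[1/(2k+1), 1/(2k))` and `Te y = 2k − 1/y` on `[1/(2k), 1/(2k−1))` (`k ≥ 2`). -/
noncomputable def Te (y : ℝ) : ℝ := |1 / y - 2 * (⌊(1 / y + 1) / 2⌋ : ℝ)|

/-- The spliced continued fraction (SCF) map `T : [0,1] → [0,1]`, with
`T 0 = 0`, `T 1 = 1`.  On `(0,1/2]` it is the even continued fraction map
(see `Te`), and on `(1/2,1)` it is the odd–odd map, which is the conjugate
`ι ∘ Te ∘ ι` of the even map; this agrees with the branchwise definition: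
`T x = (k x − (k−1))/(k − (k+1) x)` on `((k−1)/k, (2k−1)/(2k+1)]` and
`T x = (k − (k+1) x)/(k x − (k−1))` on `((2k−1)/(2k+1), k/(k+1)]` for `k ≥ 2`. -/
noncomputable def T (x : ℝ) : ℝ :=
  if x ≤ 0 then 0
  else if 1 ≤ x then 1
  else if x ≤ 1 / 2 then Te x
  else iota (Te (iota x))

/-- Parity label of a digit: `e` (even cusp) or `o` (odd–odd cusp). -/
inductive Par | e | o
deriving DecidableEq

/-- A candidate SCF digit `(a, ε)_s`. -/
structure Digit where
  a : ℤ
  eps : ℤ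
  s : Par
deriving DecidableEq

/-- The digit set `𝒜 = {(k,ε)_s : k ≥ 2, ε = ±1, s ∈ {e,o}} ∪ {(1,+1)_e}`. -/
def Digit.Valid (d : Digit) : Prop :=
  (2 ≤ d.a ∧ (d.eps = 1 ∨ d.eps = -1)) ∨ (d.a = 1 ∧ d.eps = 1 ∧ d.s = Par.e)

/-- The branch intervals `I_{(a,ε)_s}` of the SCF map. -/
noncomputable def branch (d : Digit) : Set ℝ :=
  match d.s with
  | Par.e =>
      if d.a = 1 then Set.Icc (1/3 : ℝ) (1/2)
      else if d.eps = 1 then Set.Ico (1 / (2 * (d.a : ℝ) + 1)) (1 / (2 * (d.a : ℝ)))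
      else Set.Ico (1 / (2 * (d.a : ℝ))) (1 / (2 * (d.a : ℝ) - 1))
  | Par.o =>
      if d.eps = 1 then
        Set.Ioc ((2 * (d.a : ℝ) - 1) / (2 * (d.a : ℝ) + 1)) ((d.a : ℝ) / ((d.a : ℝ) + 1))
      else
        Set.Ioc (((d.a : ℝ) - 1) / (d.a : ℝ)) ((2 * (d.a : ℝ) - 1) / (2 * (d.a : ℝ) + 1))

open Classical in
/-- The SCF digit of a point `y` (the unique valid digit `d` with `y ∈ I_d`;
well defined for every `y ∈ (0,1)`). -/
noncomputable def digit (y : ℝ) : Digit :=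
  if h : ∃ d : Digit, d.Valid ∧ y ∈ branch d then h.choose else ⟨1, 1, Par.e⟩

/-- The `n`-th SCF digit `(a_n(x), ε_n(x))_{s_n(x)}` of `x`, `n ≥ 1`,
determined by `T^[n−1] x ∈ I_{(a_n,ε_n)_{s_n}}`. -/
noncomputable def dig (n : ℕ) (x : ℝ) : Digit := digit (T^[n - 1] x)

/-- The `n`-th SCF partial quotient `a_n(x)`. -/
noncomputable def a (n : ℕ) (x : ℝ) : ℤ := (dig n x).a

/-- The invariant density `f_μ`. -/
noncomputable def fdens (x : ℝ) : ℝ :=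
  2 / (Real.log (2 + Real.sqrt 3) * (1 - (2 - Real.sqrt 3) * x) * (1 + Real.sqrt 3 * x))

/-- The absolutely continuous `T`-invariant probability measure `μ` on `(0,1)`. -/
noncomputable def mu : Measure ℝ :=
  (volume.restrict (Set.Ioo (0 : ℝ) 1)).withDensity fun x => ENNReal.ofReal (fdens x)

/-- The inverse branches `h_{(a,ε)_s}` of the SCF map `T`. -/
noncomputable def h (d : Digit) (x : ℝ) : ℝ :=
  match d.s with
  | Par.e => 1 / (2 * (d.a : ℝ) + (d.eps : ℝ) * x)
  | Par.o =>
      if d.eps = 1 then (((d.a : ℝ) - 1) * x + (d.a : ℝ)) / ((d.a : ℝ) * x + ((d.a : ℝ) + 1))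
      else ((d.a : ℝ) * x + ((d.a : ℝ) - 1)) / (((d.a : ℝ) + 1) * x + (d.a : ℝ))

/-- Composed inverse branch `h_{A^{(n)}} = h_{A₁} ∘ ⋯ ∘ h_{A_n}` of a word. -/
noncomputable def hWord (l : List Digit) : ℝ → ℝ :=
  l.foldr (fun d g => h d ∘ g) id

/-- The dual inverse branches `bar h_{(b,η)_t}`. -/
noncomputable def hbar (d : Digit) (y : ℝ) : ℝ :=
  match d.s with
  | Par.e => (d.eps : ℝ) / (2 * (d.a : ℝ) + y)
  | Par.o =>
      1 / (1 + (d.eps : ℝ) / (((d.a : ℝ) - ((max 0 d.eps : ℤ) : ℝ)) + 1 / (1 + y)))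

/-- The matrix `M_{(a,ε)_s}` associated with the inverse branch `h_{(a,ε)_s}`. -/
noncomputable def Mdig (d : Digit) : Matrix (Fin 2) (Fin 2) ℝ :=
  match d.s with
  | Par.e => !![0, 1; (d.eps : ℝ), 2 * (d.a : ℝ)]
  | Par.o =>
      !![(d.a : ℝ) - ((max 0 d.eps : ℤ) : ℝ), (d.a : ℝ) - ((max 0 d.eps : ℤ) : ℝ) + (d.eps : ℝ);
         (d.a : ℝ) - ((max 0 d.eps : ℤ) : ℝ) + 1, (d.a : ℝ) - ((max 0 d.eps : ℤ) : ℝ) + (d.eps : ℝ) + 1]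

/-- `M_n(x) = M_{(a₁,ε₁)_{s₁}} ⋯ M_{(a_n,ε_n)_{s_n}}`. -/
noncomputable def Mn (n : ℕ) (x : ℝ) : Matrix (Fin 2) (Fin 2) ℝ :=
  ((List.range n).map fun i => Mdig (digit (T^[i] x))).prod

/-- `P_n(x)`: the `(1,2)`-entry of `M_n(x)` (numerator of the `n`-th convergent). -/
noncomputable def Pc (n : ℕ) (x : ℝ) : ℝ := Mn n x 0 1

/-- `Q_n(x)`: the `(2,2)`-entry of `M_n(x)` (denominator of the `n`-th convergent). -/
noncomputable def Qc (n : ℕ) (x : ℝ) : ℝ := Mn n x 1 1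


/-- The theta group Θ: integer matrices of determinant 1 congruent mod 2
either to the identity or to `[[0,−1],[1,0]]`. -/
def InTheta (g : Matrix (Fin 2) (Fin 2) ℤ) : Prop :=
  g.det = 1 ∧
    ((g 0 0 % 2 = 1 ∧ g 0 1 % 2 = 0 ∧ g 1 0 % 2 = 0 ∧ g 1 1 % 2 = 1) ∨
     (g 0 0 % 2 = 0 ∧ g 0 1 % 2 = 1 ∧ g 1 0 % 2 = 1 ∧ g 1 1 % 2 = 0))

/-- The region `𝓘 = (1,∞) × [−√3, −√3+2) ∪ (−∞,−1) × (√3−2, √3]`. -/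
noncomputable def calI : Set (ℝ × ℝ) :=
  (Set.Ioi (1 : ℝ)) ×ˢ (Set.Ico (-(Real.sqrt 3)) (-(Real.sqrt 3) + 2)) ∪
    (Set.Iio (-1 : ℝ)) ×ˢ (Set.Ioc (Real.sqrt 3 - 2) (Real.sqrt 3))

/-!
`Θ` contains `S : z ↦ -z⁻¹` and `T² : z ↦ z + 2`. Translating `y` into `(-1, 1)` by an even
integer and then, if `x` is in `(-1, 1)` as well, applying `S`, lowers `|x - y|⁻¹` by at least
`1` when `x` and `y` have the same sign; when they have opposite signs, `|Sx - Sy| > 2`, so the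
next translation leaves `x` outside `[-1, 1]`. Hence some element of `Θ` gives `1 < |x|` and
`|y| < 1`, and by the symmetry `x ↦ -x` of `𝓘` we may take `x > 1`. While `y ∈ [2 - √3, 1)`,
the parabolic map `z ↦ 2 - z⁻¹ = T² S z` fixing `1` keeps `x > 1` and `y ∈ [-√3, 1)` and lowers
`(1 - y)⁻¹` by exactly `1`, so `y` eventually lands in `[-√3, 2 - √3)`.
-/

open scoped MatrixGroups

noncomputable def mobius (g : Matrix (Fin 2) (Fin 2) ℤ) (x : ℝ) : ℝ :=
  ((g 0 0 : ℝ) * x + (g 0 1 : ℝ)) / ((g 1 0 : ℝ) * x + (g 1 1 : ℝ))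

section InTheta

variable {g h : Matrix (Fin 2) (Fin 2) ℤ}

theorem inTheta_iff_parity : InTheta g ↔ g.det = 1 ∧
    ((Odd (g 0 0) ∧ Even (g 0 1) ∧ Even (g 1 0) ∧ Odd (g 1 1)) ∨
     (Even (g 0 0) ∧ Odd (g 0 1) ∧ Odd (g 1 0) ∧ Even (g 1 1))) := by
  simp only [InTheta, Int.odd_iff, Int.even_iff]

theorem InTheta.mul (hg : InTheta g) (hh : InTheta h) : InTheta (g * h) := by
  rw [inTheta_iff_parity] at hg hh ⊢
  obtain ⟨hg_det, hg⟩ := hg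
  obtain ⟨hh_det, hh⟩ := hh
  refine ⟨by rw [Matrix.det_mul, hg_det, hh_det, one_mul], ?_⟩
  simp only [Matrix.mul_apply, Fin.sum_univ_two]
  rcases hg with hg | hg <;> rcases hh with hh | hh <;>
    simp [← Int.not_even_iff_odd, Int.even_add, Int.even_mul] at hg hh ⊢ <;> simp [hg, hh]

theorem inTheta_one : InTheta 1 := by
  simp [InTheta]

theorem inTheta_S : InTheta ↑ModularGroup.S := by
  simp [InTheta, ModularGroup.coe_S]

theorem inTheta_T_zpow {m : ℤ} (hm : Even m) : InTheta ↑(ModularGroup.T ^ m) := by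
  simp [inTheta_iff_parity, ModularGroup.coe_T_zpow, hm]

theorem InTheta.conj_neg (hg : InTheta g) : InTheta !![g 0 0, -g 0 1; -g 1 0, g 1 1] := by
  rw [inTheta_iff_parity] at hg ⊢
  simpa [Matrix.det_fin_two] using hg

end InTheta

section Mobius

variable {g h : Matrix (Fin 2) (Fin 2) ℤ} {x : ℝ}

theorem denom_ne_zero (hg : g.det = 1) (hx : Irrational x) : (g 1 0 : ℝ) * x + g 1 1 ≠ 0 := by
  intro h0
  rcases eq_or_ne (g 1 0) 0 with hc | hc
  · have : g 1 1 = 0 := by exact_mod_cast (by simpa [hc] using h0 : (g 1 1 : ℝ) = 0)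
    simp [Matrix.det_fin_two, hc, this] at hg
  · exact ((hx.intCast_mul hc).add_intCast (g 1 1)).ne_zero h0

theorem irrational_mobius (hg : g.det = 1) (hx : Irrational x) : Irrational (mobius g x) := by
  rintro ⟨q, hq⟩
  have hD := denom_ne_zero hg hx
  have hlin : ((g 0 0 : ℝ) - q * g 1 0) * x = q * g 1 1 - g 0 1 := by
    rw [SCF.mobius, eq_div_iff hD] at hq
    linear_combination -hq
  have hdet : (g 0 0 : ℝ) * g 1 1 - g 0 1 * g 1 0 = 1 := by
    exact_mod_cast (Matrix.det_fin_two g).symm.trans hg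
  rcases eq_or_ne ((g 0 0 : ℝ) - q * g 1 0) 0 with hc | hc
  · rw [hc, zero_mul] at hlin
    exact one_ne_zero (by linear_combination -hdet + g 1 1 * hc - g 1 0 * hlin : (1 : ℝ) = 0)
  · refine hx ⟨(q * g 1 1 - g 0 1) / (g 0 0 - q * g 1 0), ?_⟩
    push_cast
    rw [← hlin, mul_div_cancel_left₀ _ hc]

-- Only the inner denominator matters: if the outer one vanishes, both sides are `x / 0 = 0`.
theorem mobius_mul (hD : (h 1 0 : ℝ) * x + h 1 1 ≠ 0) :
    mobius (g * h) x = mobius g (mobius h x) := by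
  simp only [SCF.mobius, Matrix.mul_apply, Fin.sum_univ_two]
  push_cast
  rw [mul_div_assoc', mul_div_assoc', div_add' _ _ _ hD, div_add' _ _ _ hD,
    div_div_div_cancel_right₀ hD]
  congr 1 <;> ring

theorem mobius_one : mobius 1 x = x := by
  simp [SCF.mobius]

theorem mobius_S : mobius ↑ModularGroup.S x = -x⁻¹ := by
  simp [SCF.mobius, ModularGroup.coe_S, neg_div]

theorem mobius_T_zpow (m : ℤ) : mobius ↑(ModularGroup.T ^ m) x = x + m := by
  simp [SCF.mobius, ModularGroup.coe_T_zpow]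

theorem mobius_conj_neg : mobius !![g 0 0, -g 0 1; -g 1 0, g 1 1] x = -mobius g (-x) := by
  simp only [SCF.mobius, Matrix.of_apply, Matrix.cons_val', Matrix.cons_val_zero,
    Matrix.cons_val_one, Matrix.empty_val', Matrix.cons_val_fin_one]
  push_cast
  rw [← neg_div]
  congr 1 <;> ring

end Mobius

def ThetaReaches (s : Set (ℝ × ℝ)) (x y : ℝ) : Prop :=
  ∃ g, InTheta g ∧ (mobius g x, mobius g y) ∈ s

namespace ThetaReaches

variable {s t : Set (ℝ × ℝ)} {x y : ℝ}

theorem of_mem (h : (x, y) ∈ s) : ThetaReaches s x y :=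
  ⟨1, inTheta_one, by simpa only [mobius_one] using h⟩

theorem of_mobius {h : Matrix (Fin 2) (Fin 2) ℤ} (hh : InTheta h) (hx : Irrational x)
    (hy : Irrational y) (H : ThetaReaches s (mobius h x) (mobius h y)) : ThetaReaches s x y := by
  obtain ⟨g, hg, hmem⟩ := H
  refine ⟨g * h, hg.mul hh, ?_⟩
  rwa [mobius_mul (denom_ne_zero hh.1 hx), mobius_mul (denom_ne_zero hh.1 hy)]

theorem trans (H : ThetaReaches s x y) (hx : Irrational x) (hy : Irrational y)
    (hst : ∀ p ∈ s, Irrational p.1 → Irrational p.2 → ThetaReaches t p.1 p.2) :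
    ThetaReaches t x y := by
  obtain ⟨h, hh, hmem⟩ := H
  exact of_mobius hh hx hy (hst _ hmem (irrational_mobius hh.1 hx) (irrational_mobius hh.1 hy))

theorem of_neg (H : ThetaReaches s (-x) (-y)) (hs : ∀ p q, (p, q) ∈ s → (-p, -q) ∈ s) :
    ThetaReaches s x y := by
  obtain ⟨g, hg, hmem⟩ := H
  refine ⟨_, hg.conj_neg, ?_⟩
  simpa only [mobius_conj_neg, neg_neg] using hs _ _ hmem

end ThetaReaches

theorem _root_.Irrational.abs_ne_one {x : ℝ} (hx : Irrational x) : |x| ≠ 1 := by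
  intro h
  rcases abs_eq zero_le_one |>.mp h with h1 | h1
  · exact hx.ne_one h1
  · exact hx.ne_int (-1) (by exact_mod_cast h1)

theorem exists_even_abs_add_lt_one {y : ℝ} (hy : Irrational y) :
    ∃ m : ℤ, Even m ∧ |y + m| < 1 := by
  refine ⟨-(2 * round (y / 2)), (even_two_mul _).neg,
    lt_of_le_of_ne ?_ (hy.add_intCast _).abs_ne_one⟩
  have := abs_sub_round (y / 2)
  push_cast
  rw [show y + -(2 * (round (y / 2) : ℝ)) = 2 * (y / 2 - round (y / 2)) by ring, abs_mul, abs_two]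
  linarith

theorem inv_abs_inv_sub_inv_le_or_lt {a b : ℝ} (ha : |a| < 1) (hb : |b| < 1) (ha0 : a ≠ 0)
    (hb0 : b ≠ 0) (hab : a ≠ b) :
    |a⁻¹ - b⁻¹|⁻¹ ≤ |a - b|⁻¹ - 1 ∨ |a⁻¹ - b⁻¹|⁻¹ < 2⁻¹ := by
  have hd : 0 < |a - b| := abs_pos.mpr (sub_ne_zero.mpr hab)
  rw [inv_sub_inv ha0 hb0, abs_div, inv_div, abs_sub_comm b a, abs_mul, div_le_iff₀ hd, sub_mul,
    inv_mul_cancel₀ hd.ne', div_lt_iff₀ hd]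
  -- same signs: `|a| * |b| + |a - b| ≤ 1`; opposite signs: `2 * |a| * |b| < |a| + |b| = |a - b|`
  refine (lt_or_gt_of_ne (mul_ne_zero ha0 hb0)).elim (fun _ => Or.inr ?_) (fun _ => Or.inl ?_) <;>
    rcases abs_cases a with ⟨ea, _⟩ | ⟨ea, _⟩ <;> rcases abs_cases b with ⟨eb, _⟩ | ⟨eb, _⟩ <;>
    rcases abs_cases (a - b) with ⟨ed, _⟩ | ⟨ed, _⟩ <;> rw [ea, eb, ed] <;>
    nlinarith [abs_lt.mp ha, abs_lt.mp hb]

theorem thetaReaches_one_lt_abs_abs_lt_one {x y : ℝ} (hx : Irrational x) (hy : Irrational y)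
    (hxy : x ≠ y) : ThetaReaches {p | 1 < |p.1| ∧ |p.2| < 1} x y := by
  obtain ⟨n, hn⟩ := exists_nat_ge |x - y|⁻¹
  -- the offset `2⁻¹` absorbs the opposite-sign case of `inv_abs_inv_sub_inv_le_or_lt`
  replace hn : |x - y|⁻¹ ≤ n + 2⁻¹ := by linarith
  induction n using Nat.strong_induction_on generalizing x y with
  | _ n ih =>
    obtain ⟨m, hm, hym⟩ := exists_even_abs_add_lt_one hy
    refine .of_mobius (inTheta_T_zpow hm) hx hy ?_
    rw [mobius_T_zpow, mobius_T_zpow]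
    rcases lt_or_ge 1 |x + m| with hxm | hxm
    · exact .of_mem ⟨hxm, hym⟩
    replace hxm : |x + m| < 1 := hxm.lt_of_ne (hx.add_intCast m).abs_ne_one
    have hsub : x + m - (y + m) = x - y := by ring
    have hn0 : n ≠ 0 := by
      rintro rfl
      have : |x - y| < 2 := by
        rw [← hsub]; linarith [abs_sub (x + m) (y + m)]
      have : 2⁻¹ < |x - y|⁻¹ := (inv_lt_inv₀ two_pos (abs_pos.mpr (sub_ne_zero.mpr hxy))).mpr this
      push_cast at hn; linarith
    obtain ⟨k, rfl⟩ := Nat.exists_eq_succ_of_ne_zero hn0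
    have hx' := hx.add_intCast m
    have hy' := hy.add_intCast m
    refine .of_mobius inTheta_S hx' hy' ?_
    rw [mobius_S, mobius_S]
    refine ih k k.lt_succ_self hx'.inv.neg hy'.inv.neg ?_ ?_
    · simpa using hxy
    · rw [neg_sub_neg, abs_sub_comm]
      rcases inv_abs_inv_sub_inv_le_or_lt hxm hym hx'.ne_zero hy'.ne_zero (by simpa using hxy)
        with h | h
      · push_cast at hn; rw [hsub] at h; linarith
      · linarith [k.cast_nonneg (α := ℝ)]

theorem thetaReaches_calI_of_one_lt {x y : ℝ} (hx : Irrational x) (hy : Irrational y) (hx1 : 1 < x)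
    (hy1 : -√3 ≤ y) (hy2 : y < 1) : ThetaReaches calI x y := by
  have hs3 : √3 ^ 2 = 3 := sq_sqrt (by norm_num)
  have hs3_lt : √3 < 2 := by nlinarith [sqrt_nonneg 3]
  obtain ⟨n, hn⟩ := exists_nat_ge (1 - y)⁻¹
  induction n generalizing x y with
  | zero =>
    have : 0 < (1 - y)⁻¹ := inv_pos.mpr (by linarith)
    push_cast at hn; linarith
  | succ n ih =>
    rcases lt_or_ge y (-√3 + 2) with hy3 | hy3
    · exact .of_mem (Or.inl ⟨hx1, hy1, hy3⟩)
    have hy0 : 0 < y := by linarith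
    refine .of_mobius inTheta_S hx hy ?_
    rw [mobius_S, mobius_S]
    refine .of_mobius (inTheta_T_zpow even_two) hx.inv.neg hy.inv.neg ?_
    rw [mobius_T_zpow, mobius_T_zpow, Int.cast_two]
    have hyinv : y⁻¹ ≤ 2 + √3 := by
      rw [inv_le_iff_one_le_mul₀ hy0]; nlinarith
    have hpot : (1 - (-y⁻¹ + 2))⁻¹ = (1 - y)⁻¹ - 1 := by
      have h1 : 1 - y ≠ 0 := (sub_pos.mpr hy2).ne'
      rw [show 1 - (-y⁻¹ + 2) = (1 - y) / y by field_simp; ring, inv_div]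
      field_simp
      ring
    refine ih (hx.inv.neg.add_intCast 2) (hy.inv.neg.add_intCast 2) ?_ ?_ ?_ ?_
    · linarith [inv_lt_one_of_one_lt₀ hx1]
    · linarith
    · linarith [(one_lt_inv₀ hy0).mpr hy2]
    · push_cast at hn; linarith

theorem neg_mem_calI {p q : ℝ} (h : (p, q) ∈ calI) : (-p, -q) ∈ calI := by
  simp only [calI, mem_union, mem_prod, mem_Ioi, mem_Ico, mem_Iio, mem_Ioc] at h ⊢
  rcases h with ⟨hp, hq1, hq2⟩ | ⟨hp, hq1, hq2⟩
  · exact Or.inr ⟨by linarith, by linarith, by linarith⟩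
  · exact Or.inl ⟨by linarith, by linarith, by linarith⟩

/-- any pair of distinct irrationals can be moved into `𝓘` by an
element of the theta group. -/
theorem exists_theta_element_into_calI :
    ∀ α β : ℝ, Irrational α → Irrational β → α ≠ β →
      ∃ g : Matrix (Fin 2) (Fin 2) ℤ, InTheta g ∧
        (((g 0 0 : ℝ) * α + (g 0 1 : ℝ)) / ((g 1 0 : ℝ) * α + (g 1 1 : ℝ)),
         ((g 0 0 : ℝ) * β + (g 0 1 : ℝ)) / ((g 1 0 : ℝ) * β + (g 1 1 : ℝ))) ∈ calI := by
  intro α β hα hβ hne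
  have hs3 : 1 < √3 := by rw [lt_sqrt zero_le_one]; norm_num
  refine (thetaReaches_one_lt_abs_abs_lt_one hα hβ hne).trans hα hβ ?_
  rintro ⟨x, y⟩ ⟨hx1, hy1⟩ hx hy
  obtain ⟨hy1, hy2⟩ := abs_lt.mp hy1
  rcases lt_abs.mp hx1 with hx1 | hx1
  · exact thetaReaches_calI_of_one_lt hx hy hx1 (by linarith) hy2
  · refine .of_neg ?_ fun _ _ => neg_mem_calI
    exact thetaReaches_calI_of_one_lt hx.neg hy.neg hx1 (by linarith) (by linarith)

end SCF
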